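/- (Green's Theorem for Γ-semigroups) Let G be a Γ-semigroup, a, b, c, s, s', t, t' ∈ G and γ, μ, ρ, ζ ∈ Γ with aγs = b, bμs' = a, tρb = c and t'ζc = b (so that (a,b) ∈ 𝓡 and (b,c) ∈ 𝓛, i.e. a and c are 𝓡∘𝓛-equivalent). Then the maps σ : (a)_𝓡 ∩ (a)_𝓛 → (c)_𝓡 ∩ (c)_𝓛, x ↦ tρxγs, and σ' : (c)_𝓡 ∩ (c)_𝓛 → (a)_𝓡 ∩ (a)_𝓛, x ↦ t'ζxμs', are well defined and mutually inverse; consequently σ is a one-to-one map of (a)_𝓡 ∩ (a)_𝓛 onto (c)_𝓡 ∩ (c)_𝓛 and σ' is a one-to-one map of (c)_𝓡 ∩ (c)_𝓛 onto (a)_𝓡 ∩ (a)_𝓛. -/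
import Mathlib


/-- Associativity condition making `mul : M → Γ → M → M` a Γ-semigroup structure:
`(aγb)μc = aγ(bμc)` for all `a b c ∈ M`, `γ μ ∈ Γ`. -/
def GammaAssoc {M Γ : Type*} (mul : M → Γ → M → M) : Prop :=
  ∀ (a b c : M) (γ μ : Γ), mul (mul a γ b) μ c = mul a γ (mul b μ c)

/-- Green's relation 𝓡 on a Γ-semigroup. -/
def GreenR {M Γ : Type*} (mul : M → Γ → M → M) (a b : M) : Prop :=
  a = b ∨ ∃ (x y : M) (γ μ : Γ), mul a γ x = b ∧ mul b μ y = a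

/-- Green's relation 𝓛 on a Γ-semigroup. -/
def GreenL {M Γ : Type*} (mul : M → Γ → M → M) (a b : M) : Prop :=
  a = b ∨ ∃ (x y : M) (γ μ : Γ), mul x γ a = b ∧ mul y μ b = a

/-- The 𝓡-class of `a`. -/
def Rclass {M Γ : Type*} (mul : M → Γ → M → M) (a : M) : Set M :=
  {x | GreenR mul x a}

/-- The 𝓛-class of `a`. -/
def Lclass {M Γ : Type*} (mul : M → Γ → M → M) (a : M) : Set M :=
  {x | GreenL mul x a}

/-- A right ideal of a Γ-semigroup: a nonempty subset `A` with `AΓG ⊆ A`. -/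
def IsRightIdeal {M Γ : Type*} (mul : M → Γ → M → M) (A : Set M) : Prop :=
  A.Nonempty ∧ ∀ a ∈ A, ∀ (γ : Γ) (x : M), mul a γ x ∈ A

/-- A left ideal of a Γ-semigroup: a nonempty subset `A` with `GΓA ⊆ A`. -/
def IsLeftIdeal {M Γ : Type*} (mul : M → Γ → M → M) (A : Set M) : Prop :=
  A.Nonempty ∧ ∀ a ∈ A, ∀ (γ : Γ) (x : M), mul x γ a ∈ A

/-- The set `{a} ∪ aΓG`. -/
def Rgen {M Γ : Type*} (mul : M → Γ → M → M) (a : M) : Set M :=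
  {a} ∪ {b | ∃ (γ : Γ) (x : M), mul a γ x = b}

/-- The set `{a} ∪ GΓa`. -/
def Lgen {M Γ : Type*} (mul : M → Γ → M → M) (a : M) : Set M :=
  {a} ∪ {b | ∃ (γ : Γ) (x : M), mul x γ a = b}

section Helpers

variable {M Γ : Type*} (mul : M → Γ → M → M)

theorem greenR_symm' {a b : M} (h : GreenR mul a b) : GreenR mul b a := by
  rcases h with h | ⟨x, y, δ, ε, hx, hy⟩
  · exact Or.inl h.symm
  · exact Or.inr ⟨y, x, ε, δ, hy, hx⟩

theorem greenL_symm' {a b : M} (h : GreenL mul a b) : GreenL mul b a := by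
  rcases h with h | ⟨x, y, δ, ε, hx, hy⟩
  · exact Or.inl h.symm
  · exact Or.inr ⟨y, x, ε, δ, hy, hx⟩

theorem greenR_trans' (assoc : GammaAssoc mul) {a b c : M}
    (h : GreenR mul a b) (h' : GreenR mul b c) : GreenR mul a c := by
  rcases h with h | ⟨x, y, δ, ε, hx, hy⟩
  · exact h ▸ h'
  rcases h' with h' | ⟨x', y', δ', ε', hx', hy'⟩
  · exact h' ▸ Or.inr ⟨x, y, δ, ε, hx, hy⟩
  refine Or.inr ⟨mul x δ' x', mul y' ε y, δ, ε', ?_, ?_⟩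
  · rw [← assoc, hx, hx']
  · rw [← assoc, hy', hy]

theorem greenL_trans' (assoc : GammaAssoc mul) {a b c : M}
    (h : GreenL mul a b) (h' : GreenL mul b c) : GreenL mul a c := by
  rcases h with h | ⟨x, y, δ, ε, hx, hy⟩
  · exact h ▸ h'
  rcases h' with h' | ⟨x', y', δ', ε', hx', hy'⟩
  · exact h' ▸ Or.inr ⟨x, y, δ, ε, hx, hy⟩
  refine Or.inr ⟨mul x' δ' x, mul y ε y', δ, ε', ?_, ?_⟩
  · rw [assoc, hx, hx']
  · rw [assoc, hy', hy]

/-- Right translation inverse: if `pγs = q`, `qμs' = p` and `x 𝓛 p`, then `(xγs)μs' = x`. -/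
theorem rinv' (assoc : GammaAssoc mul) {p q s s' : M} {γ μ : Γ}
    (h1 : mul p γ s = q) (h2 : mul q μ s' = p) {x : M} (hx : GreenL mul x p) :
    mul (mul x γ s) μ s' = x := by
  rcases hx with hx | ⟨u, v, δ, ε, hu, hv⟩
  · rw [hx, h1, h2]
  · rw [← hv, assoc v p s, h1, assoc v q s', h2]

/-- Right translation maps `𝓛`-class of `p` into `𝓛`-class of `q = pγs`. -/
theorem rL' (assoc : GammaAssoc mul) {p q s : M} {γ : Γ}
    (h1 : mul p γ s = q) {x : M} (hx : GreenL mul x p) :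
    GreenL mul (mul x γ s) q := by
  rcases hx with hx | ⟨u, v, δ, ε, hu, hv⟩
  · exact Or.inl (by rw [hx, h1])
  refine Or.inr ⟨u, v, δ, ε, ?_, ?_⟩
  · rw [← assoc, hu, h1]
  · rw [← h1, ← assoc, hv]

/-- Left translation inverse: if `uαp = q`, `vβq = p` and `w 𝓡 p`, then `vβ(uαw) = w`. -/
theorem linv' (assoc : GammaAssoc mul) {p q u v : M} {α β : Γ}
    (h1 : mul u α p = q) (h2 : mul v β q = p) {w : M} (hw : GreenR mul w p) :
    mul v β (mul u α w) = w := by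
  rcases hw with hw | ⟨x, y, δ, ε, hx, hy⟩
  · rw [hw, h1, h2]
  · rw [← hy, ← assoc u p y, h1, ← assoc v q y, h2]

/-- Left translation preserves `𝓡`: if `uαp = q` and `w 𝓡 p`, then `uαw 𝓡 q`. -/
theorem lR' (assoc : GammaAssoc mul) {p q u : M} {α : Γ}
    (h1 : mul u α p = q) {w : M} (hw : GreenR mul w p) :
    GreenR mul (mul u α w) q := by
  rcases hw with hw | ⟨x, y, δ, ε, hx, hy⟩
  · exact Or.inl (by rw [hw, h1])
  refine Or.inr ⟨x, y, δ, ε, ?_, ?_⟩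
  · rw [assoc, hx, h1]
  · rw [← h1, assoc, hy]

end Helpers

/-- Green's Theorem for Γ-semigroups: `σ : x ↦ tρxγs` and `σ' : x ↦ t'ζxμs'` are
well-defined, mutually inverse bijections between `(a)_𝓡 ∩ (a)_𝓛` and `(c)_𝓡 ∩ (c)_𝓛`. -/
theorem greens_theorem {M Γ : Type*} [Nonempty M] [Nonempty Γ]
    (mul : M → Γ → M → M) (assoc : GammaAssoc mul)
    (a b c s s' t t' : M) (γ μ ρ ζ : Γ)
    (h1 : mul a γ s = b) (h2 : mul b μ s' = a)
    (h3 : mul t ρ b = c) (h4 : mul t' ζ c = b) :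
    Set.MapsTo (fun x => mul (mul t ρ x) γ s)
      (Rclass mul a ∩ Lclass mul a) (Rclass mul c ∩ Lclass mul c) ∧
    Set.MapsTo (fun x => mul (mul t' ζ x) μ s')
      (Rclass mul c ∩ Lclass mul c) (Rclass mul a ∩ Lclass mul a) ∧
    Set.InvOn (fun x => mul (mul t' ζ x) μ s') (fun x => mul (mul t ρ x) γ s)
      (Rclass mul a ∩ Lclass mul a) (Rclass mul c ∩ Lclass mul c) ∧
    Set.BijOn (fun x => mul (mul t ρ x) γ s)
      (Rclass mul a ∩ Lclass mul a) (Rclass mul c ∩ Lclass mul c) ∧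
    Set.BijOn (fun x => mul (mul t' ζ x) μ s')
      (Rclass mul c ∩ Lclass mul c) (Rclass mul a ∩ Lclass mul a) := by
  have habR : GreenR mul a b := Or.inr ⟨s, s', γ, μ, h1, h2⟩
  have hbcL : GreenL mul b c := Or.inr ⟨t, t', ρ, ζ, h3, h4⟩
  have mapsσ : Set.MapsTo (fun x => mul (mul t ρ x) γ s)
      (Rclass mul a ∩ Lclass mul a) (Rclass mul c ∩ Lclass mul c) := by
    rintro x ⟨hxR, hxL⟩
    have hxR : GreenR mul x a := hxR
    have hxL : GreenL mul x a := hxL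
    have hw : mul (mul t ρ x) γ s = mul t ρ (mul x γ s) := assoc t x s ρ γ
    set w := mul x γ s with hwdef
    have hwLb : GreenL mul w b := rL' mul assoc h1 hxL
    have hwRx : GreenR mul w x := Or.inr ⟨s', s, μ, γ, rinv' mul assoc h1 h2 hxL, rfl⟩
    have hwRb : GreenR mul w b :=
      greenR_trans' mul assoc hwRx (greenR_trans' mul assoc hxR habR)
    have hR : GreenR mul (mul t ρ w) c := lR' mul assoc h3 hwRb
    have hL1 : GreenL mul (mul t ρ w) w :=
      Or.inr ⟨t', t, ζ, ρ, linv' mul assoc h3 h4 hwRb, rfl⟩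
    have hL : GreenL mul (mul t ρ w) c :=
      greenL_trans' mul assoc hL1 (greenL_trans' mul assoc hwLb hbcL)
    refine ⟨?_, ?_⟩
    · show GreenR mul (mul (mul t ρ x) γ s) c
      rw [hw]; exact hR
    · show GreenL mul (mul (mul t ρ x) γ s) c
      rw [hw]; exact hL
  have mapsσ' : Set.MapsTo (fun x => mul (mul t' ζ x) μ s')
      (Rclass mul c ∩ Lclass mul c) (Rclass mul a ∩ Lclass mul a) := by
    rintro y ⟨hyR, hyL⟩
    have hyR : GreenR mul y c := hyR
    have hyL : GreenL mul y c := hyL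
    set z := mul t' ζ y with hzdef
    have hzRb : GreenR mul z b := lR' mul assoc h4 hyR
    have hzLy : GreenL mul z y :=
      Or.inr ⟨t, t', ρ, ζ, linv' mul assoc h4 h3 hyR, rfl⟩
    have hzLb : GreenL mul z b :=
      greenL_trans' mul assoc hzLy (greenL_trans' mul assoc hyL (greenL_symm' mul hbcL))
    have hL : GreenL mul (mul z μ s') a := rL' mul assoc h2 hzLb
    have hRz : GreenR mul (mul z μ s') z :=
      Or.inr ⟨s, s', γ, μ, rinv' mul assoc h2 h1 hzLb, rfl⟩
    have hR : GreenR mul (mul z μ s') a :=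
      greenR_trans' mul assoc hRz
        (greenR_trans' mul assoc hzRb (greenR_symm' mul habR))
    exact ⟨hR, hL⟩
  have hinv : Set.InvOn (fun x => mul (mul t' ζ x) μ s') (fun x => mul (mul t ρ x) γ s)
      (Rclass mul a ∩ Lclass mul a) (Rclass mul c ∩ Lclass mul c) := by
    constructor
    · rintro x ⟨hxR, hxL⟩
      have hxR : GreenR mul x a := hxR
      have hxL : GreenL mul x a := hxL
      have hwRb : GreenR mul (mul x γ s) b :=
        greenR_trans' mul assoc
          (Or.inr ⟨s', s, μ, γ, rinv' mul assoc h1 h2 hxL, rfl⟩)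
          (greenR_trans' mul assoc hxR habR)
      show mul (mul t' ζ (mul (mul t ρ x) γ s)) μ s' = x
      rw [assoc t x s, linv' mul assoc h3 h4 hwRb, rinv' mul assoc h1 h2 hxL]
    · rintro y ⟨hyR, hyL⟩
      have hyR : GreenR mul y c := hyR
      have hyL : GreenL mul y c := hyL
      have hzLb : GreenL mul (mul t' ζ y) b :=
        greenL_trans' mul assoc
          (Or.inr ⟨t, t', ρ, ζ, linv' mul assoc h4 h3 hyR, rfl⟩)
          (greenL_trans' mul assoc hyL (greenL_symm' mul hbcL))
      show mul (mul t ρ (mul (mul t' ζ y) μ s')) γ s = y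
      rw [assoc t _ s ρ γ, rinv' mul assoc h2 h1 hzLb, linv' mul assoc h4 h3 hyR]
  exact ⟨mapsσ, mapsσ', hinv, hinv.bijOn mapsσ mapsσ', hinv.symm.bijOn mapsσ' mapsσ⟩
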